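/- Let G be a topological group, V a real topological vector space which is a Baire space, and ι a map assigning to each v ∈ V a one-parameter subgroup ι(v) of G, such that ι(c·v)(s) = ι(v)(c·s) for all c, s ∈ ℝ and v ∈ V, such that ι(v + w) = ι(v) + ι(w) in the Trotter sense for all v, w ∈ V, and such that the map V → C(ℝ, G), v ↦ ι(v), is continuous with respect to the compact-open topology on C(ℝ, G). Let Y be a metrizable locally convex real topological vector space and φ : G → Y a function of class LUC¹. Then for every g ∈ G the map V → Y, v ↦ (D_{ι(v)} φ)(g), is ℝ-linear and continuous. -/

import Mathlib

open Filter Topology Pointwise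

/-- A one-parameter subgroup of a topological group `G`: a continuous homomorphism
from the additive group of reals into `G`. -/
structure OneParamSubgroup (G : Type*) [Group G] [TopologicalSpace G] where
  toFun : ℝ → G
  continuous_toFun : Continuous toFun
  map_add : ∀ s t : ℝ, toFun (s + t) = toFun s * toFun t

/-- `X = X₁ + X₂` in the Trotter sense: `(X₁(t/n) X₂(t/n))^n → X(t)` uniformly on
compact subsets of `ℝ`. -/
def TrotterSum {G : Type*} [Group G] [TopologicalSpace G]
    (X X₁ X₂ : OneParamSubgroup G) : Prop :=
  ∀ K : Set ℝ, IsCompact K → ∀ W ∈ 𝓝 (1 : G), ∃ N : ℕ, ∀ n : ℕ, N ≤ n → ∀ t ∈ K,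
    (X.toFun t)⁻¹ * (X₁.toFun (t / (n : ℝ)) * X₂.toFun (t / (n : ℝ))) ^ n ∈ W

/-- `(D_X φ)(g)` exists and equals `z`. -/
def HasDirDerivAt {G Y : Type*} [Group G] [TopologicalSpace G]
    [AddCommGroup Y] [Module ℝ Y] [TopologicalSpace Y]
    (φ : G → Y) (X : OneParamSubgroup G) (g : G) (z : Y) : Prop :=
  Tendsto (fun t : ℝ => t⁻¹ • (φ (g * X.toFun t) - φ g)) (𝓝[≠] (0 : ℝ)) (𝓝 z)

/-- `φ : G → Y` is locally left uniformly continuous. -/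
def LocallyLeftUC {G Y : Type*} [Group G] [TopologicalSpace G]
    [AddCommGroup Y] [TopologicalSpace Y] (φ : G → Y) : Prop :=
  ∀ g₀ : G, ∃ V ∈ 𝓝 g₀, ∀ U ∈ 𝓝 (0 : Y), ∃ W ∈ 𝓝 (1 : G),
    ∀ x ∈ V, ∀ y ∈ V, x⁻¹ * y ∈ W → φ x - φ y ∈ U

/-- `φ` is of class LUC¹, with `D X g = (D_X φ)(g)`. -/
def IsLUC1 {G Y : Type*} [Group G] [TopologicalSpace G]
    [AddCommGroup Y] [Module ℝ Y] [TopologicalSpace Y]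
    (φ : G → Y) (D : OneParamSubgroup G → G → Y) : Prop :=
  LocallyLeftUC φ ∧ (∀ X g, HasDirDerivAt φ X g (D X g)) ∧
    ∀ X, LocallyLeftUC (D X)

/-!
Homogeneity of `v ↦ (D_{ι v} φ)(g)` is the chain rule for `t ↦ ι(v)(c t)`, and continuity holds
because this linear map is the pointwise limit, as `t → 0`, of the continuous difference quotients
`v ↦ t⁻¹ (φ(g ι(v)(t)) - φ(g))`, which forces continuity on a Baire space.

For additivity write `P = ι(v)(t/n) ι(w)(t/n)`. Then `φ(g P^n) - φ(g)` telescopes into `2n`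
increments along `ι v` and `ι w`. The partial products `P^k`, `k ≤ n`, stay near the identity,
so by continuity of `D_{ι v} φ`, `D_{ι w} φ` and the mean value inequality in the locally convex
space `Y`, each increment lies in a closed convex neighbourhood of `(t/n) (D_{ι v} φ)(g)`,
resp. `(t/n) (D_{ι w} φ)(g)`. Averaging and letting `n → ∞`, so that `P^n → ι(v + w)(t)`, bounds
the difference quotient of `φ` along `ι(v + w)`.
-/

namespace OneParamSubgroup

variable {G : Type*} [Group G] [TopologicalSpace G]

theorem map_zero (X : OneParamSubgroup G) : X.toFun 0 = 1 := by
  simpa using X.map_add 0 0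

theorem eventually_forall_abs_le_mem (X : OneParamSubgroup G) {W : Set G} (hW : W ∈ 𝓝 1) :
    ∀ᶠ t in 𝓝 (0 : ℝ), ∀ s, |s| ≤ |t| → X.toFun s ∈ W := by
  obtain ⟨ε, hε, hεX⟩ := Metric.eventually_nhds_iff.1 <|
    (X.continuous_toFun.tendsto' 0 1 X.map_zero).eventually_mem hW
  filter_upwards [Metric.ball_mem_nhds 0 hε] with t ht s hs
  exact hεX (by simpa using hs.trans_lt (by simpa using ht))

end OneParamSubgroup

theorem LocallyLeftUC.continuous {G Y : Type*} [Group G] [TopologicalSpace G] [ContinuousMul G]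
    [AddCommGroup Y] [TopologicalSpace Y] [IsTopologicalAddGroup Y] {φ : G → Y}
    (h : LocallyLeftUC φ) : Continuous φ := by
  refine continuous_iff_continuousAt.2 fun g₀ => ?_
  obtain ⟨V, hV, H⟩ := h g₀
  have hsub : Tendsto (fun y => φ g₀ - φ y) (𝓝 g₀) (𝓝 0) := fun U hU => by
    rw [mem_map]
    obtain ⟨W, hW, hWU⟩ := H U hU
    have hW' : {y | g₀⁻¹ * y ∈ W} ∈ 𝓝 g₀ :=
      (continuous_const.mul continuous_id).continuousAt.preimage_mem_nhds (by simpa using hW)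
    filter_upwards [hV, hW'] with y hyV hyW
    exact hWU g₀ (mem_of_mem_nhds hV) y hyV hyW
  simpa [ContinuousAt] using (tendsto_const_nhds (x := φ g₀)).sub hsub

section DirDeriv

variable {G Y : Type*} [Group G] [TopologicalSpace G]
  [AddCommGroup Y] [Module ℝ Y] [TopologicalSpace Y]

theorem HasDirDerivAt.comp_mul [ContinuousConstSMul ℝ Y] {φ : G → Y} {X X' : OneParamSubgroup G}
    {g : G} {z : Y} (c : ℝ) (hX' : ∀ s, X'.toFun s = X.toFun (c * s))
    (h : HasDirDerivAt φ X g z) : HasDirDerivAt φ X' g (c • z) := by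
  rcases eq_or_ne c 0 with rfl | hc
  · have hX'1 : ∀ s, X'.toFun s = 1 := fun s => by rw [hX', zero_mul, X.map_zero]
    simpa [HasDirDerivAt, hX'1] using tendsto_const_nhds
  · have hmul : Tendsto (c * ·) (𝓝[≠] (0 : ℝ)) (𝓝[≠] 0) :=
      tendsto_nhdsWithin_of_tendsto_nhds_of_eventually_within _
        (((continuous_const_mul c).tendsto' 0 0 (mul_zero c)).mono_left nhdsWithin_le_nhds)
        (eventually_nhdsWithin_of_forall fun t ht => mul_ne_zero hc ht)
    refine ((h.comp hmul).const_smul c).congr fun t => ?_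
    simp only [Function.comp_apply, hX', smul_smul, mul_inv, ← mul_assoc, mul_inv_cancel₀ hc,
      one_mul]

theorem HasDirDerivAt.unique [T2Space Y] {φ : G → Y} {X : OneParamSubgroup G} {g : G}
    {z₁ z₂ : Y} (h₁ : HasDirDerivAt φ X g z₁) (h₂ : HasDirDerivAt φ X g z₂) : z₁ = z₂ :=
  tendsto_nhds_unique h₁ h₂

theorem HasDirDerivAt.hasDerivAt_comp {φ : G → Y} {X : OneParamSubgroup G} {x : G} {s : ℝ}
    {z : Y} (h : HasDirDerivAt φ X (x * X.toFun s) z) (ℓ : Y →L[ℝ] ℝ) :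
    HasDerivAt (fun u => ℓ (φ (x * X.toFun u))) (ℓ z) s := by
  rw [hasDerivAt_iff_tendsto_slope]
  have hshift : Tendsto (· - s) (𝓝[≠] s) (𝓝[≠] (0 : ℝ)) :=
    tendsto_nhdsWithin_of_tendsto_nhds_of_eventually_within _
      (((continuous_sub_right s).tendsto' s 0 (sub_self s)).mono_left nhdsWithin_le_nhds)
      (eventually_nhdsWithin_of_forall fun u hu => sub_ne_zero.2 hu)
  refine ((ℓ.continuous.tendsto z).comp (h.comp hshift)).congr fun u => ?_
  have hX : X.toFun u = X.toFun s * X.toFun (u - s) := by rw [← X.map_add, add_sub_cancel]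
  simp [slope_def_field, hX, mul_assoc, div_eq_inv_mul]

end DirDeriv

section LocallyConvex

variable {Y : Type*} [AddCommGroup Y] [Module ℝ Y]

theorem Convex.smul_sub_mem_of_increments {S : Set Y} (hS : Convex ℝ S) {f : ℕ → Y} {n : ℕ}
    (hn : n ≠ 0) {c : ℝ} (h : ∀ k < n, c • (f (k + 1) - f k) ∈ S) :
    ((n : ℝ)⁻¹ * c) • (f n - f 0) ∈ S := by
  have hsum : ((n : ℝ)⁻¹ * c) • (f n - f 0)
      = ∑ k ∈ Finset.range n, (n : ℝ)⁻¹ • c • (f (k + 1) - f k) := by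
    rw [← Finset.smul_sum, ← Finset.smul_sum, Finset.sum_range_sub, mul_smul]
  rw [hsum]
  exact hS.sum_mem (fun _ _ => by positivity) (by simp [hn])
    fun k hk => h k (Finset.mem_range.1 hk)

variable [TopologicalSpace Y] [ContinuousSMul ℝ Y]

theorem Convex.isClosed_add_self {C : Set Y} (hCc : Convex ℝ C) (hCcl : IsClosed C) :
    IsClosed (C + C) := by
  rw [← one_smul ℝ C, ← hCc.add_smul zero_le_one zero_le_one]
  exact hCcl.smul_of_ne_zero (by norm_num)

variable [IsTopologicalAddGroup Y] [LocallyConvexSpace ℝ Y]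

theorem exists_isClosed_convex_add_self_subset {U : Set Y} (hU : U ∈ 𝓝 0) :
    ∃ C ∈ 𝓝 (0 : Y), IsClosed C ∧ Convex ℝ C ∧ C + C ⊆ U := by
  obtain ⟨U₁, hU₁, hU₁U⟩ := exists_nhds_zero_half hU
  obtain ⟨C, ⟨hC, hCcl, -, hCc⟩, hCU₁⟩ := (nhds_hasBasis_absConvex_closed ℝ Y).mem_iff.1 hU₁
  exact ⟨C, hC, hCcl, hCc, Set.add_subset_iff.2 fun a ha b hb => hU₁U a (hCU₁ ha) b (hCU₁ hb)⟩

theorem inv_smul_sub_mem_of_hasDerivAt_comp {f f' : ℝ → Y} {S : Set Y} (hSc : Convex ℝ S)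
    (hScl : IsClosed S) {a b : ℝ} (hab : a ≠ b)
    (hf : ∀ (ℓ : Y →L[ℝ] ℝ) s, HasDerivAt (fun u => ℓ (f u)) (ℓ (f' s)) s)
    (hf' : ∀ s ∈ Set.uIcc a b, f' s ∈ S) : (b - a)⁻¹ • (f b - f a) ∈ S := by
  wlog hlt : a < b generalizing a b
  · have h := this hab.symm (by rwa [Set.uIcc_comm]) (hab.lt_or_gt.resolve_left hlt)
    rwa [← neg_sub b a, ← neg_sub (f b) (f a), inv_neg, neg_smul_neg] at h
  by_contra hz
  obtain ⟨ℓ, u, hℓS, hℓz⟩ := geometric_hahn_banach_closed_point hSc hScl hz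
  obtain ⟨c, hc, hℓc⟩ := exists_hasDerivAt_eq_slope (fun s => ℓ (f s)) (fun s => ℓ (f' s)) hlt
    (HasDerivAt.continuousOn fun s _ => hf ℓ s) fun s _ => hf ℓ s
  have hcS := hℓS _ (hf' c (Set.Icc_subset_uIcc (Set.Ioo_subset_Icc_self hc)))
  rw [hℓc] at hcS
  rw [map_smul, map_sub, smul_eq_mul, ← div_eq_inv_mul] at hℓz
  linarith

theorem inv_smul_sub_mem_of_hasDirDerivAt {G : Type*} [Group G] [TopologicalSpace G]
    {φ ψ : G → Y} {X : OneParamSubgroup G} (h : ∀ x, HasDirDerivAt φ X x (ψ x)) {S : Set Y}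
    (hSc : Convex ℝ S) (hScl : IsClosed S) {y : G} {τ : ℝ} (hτ : τ ≠ 0)
    (hS : ∀ s ∈ Set.uIcc 0 τ, ψ (y * X.toFun s) ∈ S) :
    τ⁻¹ • (φ (y * X.toFun τ) - φ y) ∈ S := by
  simpa [X.map_zero] using inv_smul_sub_mem_of_hasDerivAt_comp hSc hScl hτ.symm
    (fun ℓ s => (h _).hasDerivAt_comp ℓ) hS

end LocallyConvex

namespace TrotterSum

variable {G : Type*} [Group G] [TopologicalSpace G] [ContinuousMul G]
  {X X₁ X₂ : OneParamSubgroup G}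

theorem tendsto_pow (hT : TrotterSum X X₁ X₂) (t : ℝ) :
    Tendsto (fun n : ℕ => (X₁.toFun (t / n) * X₂.toFun (t / n)) ^ n) atTop (𝓝 (X.toFun t)) := by
  have h : Tendsto (fun n : ℕ => (X.toFun t)⁻¹ * (X₁.toFun (t / n) * X₂.toFun (t / n)) ^ n)
      atTop (𝓝 1) := fun W hW => by
    obtain ⟨N, hN⟩ := hT {t} isCompact_singleton W hW
    exact mem_atTop_sets.2 ⟨N, fun n hn => hN n hn t rfl⟩
  simpa using (tendsto_const_nhds (x := X.toFun t)).mul h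

/-- For `k ≤ n`, `(X₁(t/n) X₂(t/n))^k = (X₁(t'/k) X₂(t'/k))^k` with `t' = k t / n`, which is
close to `X(t')` when `k` is large and close to `1` when `k` is small. -/
theorem eventually_forall_pow_mem (hT : TrotterSum X X₁ X₂) {W : Set G} (hW : W ∈ 𝓝 1) :
    ∀ᶠ t in 𝓝 (0 : ℝ), ∀ᶠ n : ℕ in atTop, ∀ k ≤ n,
      (X₁.toFun (t / n) * X₂.toFun (t / n)) ^ k ∈ W := by
  obtain ⟨V, hV, hVW⟩ := exists_nhds_one_split hW
  obtain ⟨δ, hδ, hXδ⟩ : ∃ δ > 0, ∀ s ∈ Set.Icc (-δ) δ, X.toFun s ∈ V := by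
    obtain ⟨ε, hε, hball⟩ := Metric.mem_nhds_iff.1 <|
      X.continuous_toFun.continuousAt.preimage_mem_nhds (x := 0) (by rwa [X.map_zero])
    refine ⟨ε / 2, by positivity, fun s hs => hball ?_⟩
    rw [Metric.mem_ball, Real.dist_eq, sub_zero, abs_lt]
    constructor <;> linarith [hs.1, hs.2]
  obtain ⟨N, hN⟩ := hT (Set.Icc (-δ) δ) isCompact_Icc V hV
  have hsmall : ∀ᶠ s in 𝓝 (0 : ℝ), ∀ k ∈ {k | k < N}, (X₁.toFun s * X₂.toFun s) ^ k ∈ W := by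
    refine (eventually_all_finite (Set.finite_lt_nat N)).2 fun k _ => ?_
    have hcont : Continuous fun s => (X₁.toFun s * X₂.toFun s) ^ k :=
      (X₁.continuous_toFun.mul X₂.continuous_toFun).pow k
    refine hcont.continuousAt.preimage_mem_nhds ?_
    rwa [X₁.map_zero, X₂.map_zero, mul_one, one_pow]
  filter_upwards [Icc_mem_nhds (neg_lt_zero.2 hδ) hδ] with t ht
  filter_upwards [(tendsto_const_div_atTop_nhds_zero_nat t).eventually hsmall] with n hn k hkn
  rcases lt_or_ge k N with hkN | hNk
  · exact hn k hkN
  rcases Nat.eq_zero_or_pos k with rfl | hk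
  · simpa using mem_of_mem_nhds hW
  have hnpos : (0 : ℝ) < n := by exact_mod_cast hk.trans_le hkn
  have hkn' : (k : ℝ) / n ≤ 1 := div_le_one_of_le₀ (by exact_mod_cast hkn) hnpos.le
  have ht' : k * t / n ∈ Set.Icc (-δ) δ := by
    refine abs_le.1 ?_
    rw [mul_div_right_comm, abs_mul, abs_of_nonneg (by positivity)]
    exact (mul_le_of_le_one_left (abs_nonneg t) hkn').trans (abs_le.2 ht)
  have hdiv : k * t / n / k = t / n := by field_simp
  have hmem := hN k hNk _ ht'
  rw [hdiv] at hmem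
  simpa using hVW _ (hXδ _ ht') _ hmem

end TrotterSum

section Trotter

variable {G Y : Type*} [Group G] [TopologicalSpace G] [AddCommGroup Y] [Module ℝ Y]
  [TopologicalSpace Y] [IsTopologicalAddGroup Y] [ContinuousSMul ℝ Y] [LocallyConvexSpace ℝ Y]
  {φ ψ₁ ψ₂ : G → Y} {X X₁ X₂ : OneParamSubgroup G}

theorem inv_smul_sub_trotter_mem (h₁ : ∀ x, HasDirDerivAt φ X₁ x (ψ₁ x))
    (h₂ : ∀ x, HasDirDerivAt φ X₂ x (ψ₂ x)) {S₁ S₂ : Set Y} (hS₁c : Convex ℝ S₁)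
    (hS₁cl : IsClosed S₁) (hS₂c : Convex ℝ S₂) (hS₂cl : IsClosed S₂) {y : G} {τ : ℝ}
    (hτ : τ ≠ 0) {n : ℕ} (hn : n ≠ 0)
    (hS₁ : ∀ k < n, ∀ s ∈ Set.uIcc 0 τ,
      ψ₁ (y * (X₁.toFun τ * X₂.toFun τ) ^ k * X₁.toFun s) ∈ S₁)
    (hS₂ : ∀ k < n, ∀ s ∈ Set.uIcc 0 τ,
      ψ₂ (y * (X₁.toFun τ * X₂.toFun τ) ^ k * X₁.toFun τ * X₂.toFun s) ∈ S₂) :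
    ((n : ℝ)⁻¹ * τ⁻¹) • (φ (y * (X₁.toFun τ * X₂.toFun τ) ^ n) - φ y) ∈ S₁ + S₂ := by
  set P := X₁.toFun τ * X₂.toFun τ
  have hstep : ∀ k < n, τ⁻¹ • (φ (y * P ^ (k + 1)) - φ (y * P ^ k)) ∈ S₁ + S₂ := by
    intro k hk
    set x := y * P ^ k
    have hsplit : τ⁻¹ • (φ (y * P ^ (k + 1)) - φ x)
        = τ⁻¹ • (φ (x * X₁.toFun τ) - φ x)
          + τ⁻¹ • (φ (x * X₁.toFun τ * X₂.toFun τ) - φ (x * X₁.toFun τ)) := by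
      rw [← smul_add, pow_succ, ← mul_assoc, ← mul_assoc, sub_add_sub_cancel']
    rw [hsplit]
    exact Set.add_mem_add (inv_smul_sub_mem_of_hasDirDerivAt h₁ hS₁c hS₁cl hτ (hS₁ k hk))
      (inv_smul_sub_mem_of_hasDirDerivAt h₂ hS₂c hS₂cl hτ (hS₂ k hk))
  simpa using (hS₁c.add hS₂c).smul_sub_mem_of_increments (f := fun k => φ (y * P ^ k)) hn hstep

theorem hasDirDerivAt_of_trotterSum [ContinuousMul G] (hT : TrotterSum X X₁ X₂)
    (hφ : Continuous φ) (h₁ : ∀ x, HasDirDerivAt φ X₁ x (ψ₁ x))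
    (h₂ : ∀ x, HasDirDerivAt φ X₂ x (ψ₂ x)) {g : G} (hψ₁ : ContinuousAt ψ₁ g)
    (hψ₂ : ContinuousAt ψ₂ g) : HasDirDerivAt φ X g (ψ₁ g + ψ₂ g) := by
  rw [HasDirDerivAt, ← tendsto_sub_nhds_zero_iff]
  intro U hU
  rw [mem_map]
  obtain ⟨C, hC, hCcl, hCc, hCU⟩ := exists_isClosed_convex_add_self_subset hU
  have hnear : ∀ᶠ x in 𝓝 (1 : G), ψ₁ (g * x) ∈ ψ₁ g +ᵥ C ∧ ψ₂ (g * x) ∈ ψ₂ g +ᵥ C := by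
    have hg : Tendsto (g * ·) (𝓝 1) (𝓝 g) := by simpa using (continuous_const_mul g).tendsto 1
    have hvadd : ∀ a : Y, a +ᵥ C ∈ 𝓝 a := fun a => by
      simpa using (vadd_mem_nhds_vadd_iff a (a := 0)).2 hC
    exact ((hψ₁.tendsto.comp hg).eventually_mem (hvadd _)).and
      ((hψ₂.tendsto.comp hg).eventually_mem (hvadd _))
  obtain ⟨W, hW, hWnear⟩ := exists_nhds_one_split4 hnear
  filter_upwards [eventually_nhdsWithin_of_eventually_nhds <|
      (X₁.eventually_forall_abs_le_mem hW).and <| (X₂.eventually_forall_abs_le_mem hW).and <|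
        hT.eventually_forall_pow_mem hW,
    self_mem_nhdsWithin] with t ⟨htX₁, htX₂, htP⟩ ht0
  suffices hslope : t⁻¹ • (φ (g * X.toFun t) - φ g) ∈ (ψ₁ g + ψ₂ g) +ᵥ (C + C) by
    obtain ⟨_, ⟨a, ha, b, hb, rfl⟩, hab⟩ := hslope
    simp only [Set.mem_preimage, ← hab, vadd_eq_add, add_sub_cancel_left]
    exact hCU (Set.add_mem_add ha hb)
  refine ((hCc.isClosed_add_self hCcl).vadd _).mem_of_tendsto
    ((((hφ.tendsto _).comp ((hT.tendsto_pow t).const_mul g)).sub_const (φ g)).const_smul t⁻¹) ?_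
  filter_upwards [htP, eventually_ne_atTop 0] with n hPn hn
  have hτ : t / n ≠ 0 := div_ne_zero ht0 (Nat.cast_ne_zero.2 hn)
  have habs : ∀ s ∈ Set.uIcc 0 (t / n), |s| ≤ |t| := fun s hs => by
    have := Set.abs_sub_left_of_mem_uIcc hs
    rw [sub_zero, sub_zero, abs_div, Nat.abs_cast] at this
    exact this.trans (div_le_self (abs_nonneg t) (by exact_mod_cast Nat.one_le_iff_ne_zero.2 hn))
  have hscal : ((n : ℝ)⁻¹ * (t / n)⁻¹) = t⁻¹ := by field_simp
  rw [← vadd_add_vadd, ← hscal]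
  refine inv_smul_sub_trotter_mem h₁ h₂ (hCc.vadd _) (hCcl.vadd _) (hCc.vadd _) (hCcl.vadd _) hτ hn
    (fun k hk s hs => ?_) (fun k hk s hs => ?_)
  · simpa [mul_assoc] using (hWnear (hPn k hk.le) (htX₁ s (habs s hs)) (mem_of_mem_nhds hW)
      (mem_of_mem_nhds hW)).1
  · simpa [mul_assoc] using (hWnear (hPn k hk.le) (htX₁ _ (habs _ Set.right_mem_uIcc))
      (htX₂ s (habs s hs)) (mem_of_mem_nhds hW)).2

end Trotter

section Baire

variable {V Y : Type*} [AddCommGroup V] [TopologicalSpace V] [IsTopologicalAddGroup V]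
  [AddCommGroup Y] [TopologicalSpace Y] [IsTopologicalAddGroup Y]

theorem AddMonoidHom.continuous_of_nonempty_interior_preimage (f : V →+ Y)
    (h : ∀ U ∈ 𝓝 (0 : Y), (interior (f ⁻¹' U)).Nonempty) : Continuous f := by
  refine continuous_of_continuousAt_zero f fun U hU => mem_map.2 ?_
  rw [map_zero] at hU
  obtain ⟨U₁, hU₁, hU₁U⟩ := exists_nhds_half_neg hU
  obtain ⟨v₀, hv₀⟩ := h U₁ hU₁
  have hshift : (v₀ + ·) ⁻¹' interior (f ⁻¹' U₁) ∈ 𝓝 (0 : V) :=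
    (continuous_const_add v₀).continuousAt.preimage_mem_nhds
      (by simpa using isOpen_interior.mem_nhds hv₀)
  filter_upwards [hshift] with v hv
  have h₁ : f (v₀ + v) ∈ U₁ := interior_subset (s := f ⁻¹' U₁) hv
  have h₀ : f v₀ ∈ U₁ := interior_subset (s := f ⁻¹' U₁) hv₀
  simpa using hU₁U _ h₁ _ h₀

variable [Module ℝ Y] [ContinuousSMul ℝ Y]

theorem Filter.Tendsto.exists_eventually_mem_smul {ι : Type*} {l : Filter ι} {f : ι → Y} {y : Y}
    (hf : Tendsto f l (𝓝 y)) {C : Set Y} (hC : C ∈ 𝓝 0) :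
    ∃ m : ℕ, ∀ᶠ i in l, f i ∈ ((m : ℝ) + 1) • C := by
  obtain ⟨C₁, hC₁, hC₁C⟩ := exists_nhds_zero_half hC
  obtain ⟨m, hm⟩ : ∃ m : ℕ, ((m : ℝ) + 1)⁻¹ • y ∈ C₁ := by
    have : Tendsto (fun m : ℕ => ((m : ℝ) + 1)⁻¹ • y) atTop (𝓝 0) := by
      simpa using (tendsto_one_div_add_atTop_nhds_zero_nat (𝕜 := ℝ)).smul_const y
    exact (this.eventually_mem hC₁).exists
  have hm0 : (m : ℝ) + 1 ≠ 0 := by positivity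
  refine ⟨m, ?_⟩
  filter_upwards [(tendsto_sub_nhds_zero_iff.2 hf).eventually_mem
    ((set_smul_mem_nhds_zero_iff hm0).2 hC₁)] with i hi
  rw [Set.mem_smul_set_iff_inv_smul_mem₀ hm0] at hi ⊢
  simpa [← smul_add] using hC₁C _ hm _ hi

variable [Module ℝ V] [ContinuousSMul ℝ V] [BaireSpace V]

/-- The closed sets `{v | F i v ∈ (m + 1) • C for all i ∈ s k}`, where `s` is a countable basis
of `l`, cover `V`; by Baire one of them has interior, and `L` maps it into `(m + 1) • C`. -/
theorem LinearMap.continuous_of_tendsto {ι : Type*} {l : Filter ι} [l.IsCountablyGenerated]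
    [l.NeBot] (L : V →ₗ[ℝ] Y) {F : ι → V → Y} (hF : ∀ i, Continuous (F i))
    (hL : ∀ v, Tendsto (F · v) l (𝓝 (L v))) : Continuous L := by
  refine L.toAddMonoidHom.continuous_of_nonempty_interior_preimage fun U hU => ?_
  obtain ⟨C, hC, hCcl, hCU⟩ := exists_mem_nhds_isClosed_subset hU
  obtain ⟨s, hs⟩ := l.exists_antitone_basis
  set E : ℕ × ℕ → Set V := fun p => ⋂ i ∈ s p.2, F i ⁻¹' (((p.1 : ℝ) + 1) • C)
  have hEcl : ∀ p, IsClosed (E p) := fun p => isClosed_biInter fun i _ =>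
    (hCcl.smul_of_ne_zero (by positivity)).preimage (hF i)
  have hEcover : ⋃ p, E p = Set.univ := Set.eq_univ_of_forall fun v => by
    obtain ⟨m, hm⟩ := (hL v).exists_eventually_mem_smul hC
    obtain ⟨k, -, hk⟩ := hs.eventually_iff.1 hm
    exact Set.mem_iUnion.2 ⟨(m, k), Set.mem_iInter₂.2 fun i hi => hk hi⟩
  obtain ⟨⟨m, k⟩, v₀, hv₀⟩ := nonempty_interior_of_iUnion_of_closed hEcl hEcover
  have hm0 : (m : ℝ) + 1 ≠ 0 := by positivity
  have hEL : E (m, k) ⊆ L ⁻¹' (((m : ℝ) + 1) • C) := fun v hv =>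
    (hCcl.smul_of_ne_zero hm0).mem_of_tendsto (hL v)
      (mem_of_superset (hs.mem k) fun i hi => Set.mem_iInter₂.1 hv i hi)
  have hLU : ((m : ℝ) + 1)⁻¹ • (L ⁻¹' (((m : ℝ) + 1) • C)) ⊆ L ⁻¹' U :=
    (smul_preimage_set_subset L _ _).trans (by rw [inv_smul_smul₀ hm0]; exact Set.preimage_mono hCU)
  refine ⟨((m : ℝ) + 1)⁻¹ • v₀, interior_mono hLU ?_⟩
  rw [interior_smul₀ (inv_ne_zero hm0)]
  exact Set.smul_mem_smul_set (interior_mono hEL hv₀)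

end Baire

theorem dirDeriv_linear_continuous
    {G Y V : Type*} [Group G] [TopologicalSpace G] [IsTopologicalGroup G]
    [AddCommGroup Y] [Module ℝ Y] [TopologicalSpace Y] [IsTopologicalAddGroup Y]
    [ContinuousSMul ℝ Y] [LocallyConvexSpace ℝ Y] [TopologicalSpace.MetrizableSpace Y]
    [AddCommGroup V] [Module ℝ V] [TopologicalSpace V] [IsTopologicalAddGroup V]
    [ContinuousSMul ℝ V] [BaireSpace V]
    (ι : V → OneParamSubgroup G)
    (hscal : ∀ (c : ℝ) (v : V) (s : ℝ), (ι (c • v)).toFun s = (ι v).toFun (c * s))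
    (hadd : ∀ v w : V, TrotterSum (ι (v + w)) (ι v) (ι w))
    (hιcont : Continuous fun v : V =>
      (⟨(ι v).toFun, (ι v).continuous_toFun⟩ : C(ℝ, G)))
    (φ : G → Y) (D : OneParamSubgroup G → G → Y) (hφ : IsLUC1 φ D) (g : G) :
    IsLinearMap ℝ (fun v : V => D (ι v) g) ∧
      Continuous (fun v : V => D (ι v) g) := by
  obtain ⟨hφc, hder, hDc⟩ := hφ
  have hD : ∀ X, Continuous (D X) := fun X => (hDc X).continuous
  have hlin : IsLinearMap ℝ fun v => D (ι v) g :=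
    { map_add := fun v w => (hder _ g).unique <|
        hasDirDerivAt_of_trotterSum (hadd v w) hφc.continuous (hder _) (hder _)
          (hD _).continuousAt (hD _).continuousAt
      map_smul := fun c v => (hder _ g).unique ((hder _ g).comp_mul c (hscal c v)) }
  have hquot : ∀ t : ℝ, Continuous fun v => t⁻¹ • (φ (g * (ι v).toFun t) - φ g) := fun t =>
    ((hφc.continuous.comp (continuous_const.mul ((continuous_eval_const t).comp hιcont))).sub
      continuous_const).const_smul t⁻¹
  exact ⟨hlin, (hlin.mk' _).continuous_of_tendsto (l := 𝓝[≠] 0) hquot fun v => hder (ι v) g⟩
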